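/- arXiv:1311.5548 — 9 statements merged into one kernel-verified Lean document; each statement's English description precedes it below -/
import Mathlib

section
/- Let n ≥ 1 and let A = {a_0 < a_1 < … < a_{k−1}} be a nonempty subset of the chain C_n. The interior of the simplex σ^(n){a_0,…,a_{k−1}}, i.e. the set of monotone maps α : C_n → C_n whose image is exactly A, is closed under addition: if α and β are monotone maps C_n → C_n with image equal to A, then the pointwise maximum x ↦ max(α(x), β(x)) also has image equal to A. -/
/-- The simplex σ^(n){a_0,…,a_{k−1}}: monotone maps Fin n → Fin n whose image
is contained in the range of the strictly monotone enumeration `a : Fin k → Fin n`. -/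
def EndoSimplex (n k : ℕ) (a : Fin k → Fin n) : Set (Fin n → Fin n) :=
  {α | Monotone α ∧ ∀ x, α x ∈ Set.range a}

/-- Number of points of `Fin n` at which `α` takes the value `v`. -/
def FixCount (n : ℕ) (α : Fin n → Fin n) (v : Fin n) : ℕ :=
  (Finset.univ.filter (fun i => α i = v)).card

/-- Discrete t-neighborhood DN^t_m of the vertex `ā_m` of the simplex:
elements of the simplex taking the value `a m` at least `n − t` times. -/
def DN (n k : ℕ) (a : Fin k → Fin n) (m : Fin k) (t : ℕ) : Set (Fin n → Fin n) :=
  {α | α ∈ EndoSimplex n k a ∧ n - t ≤ FixCount n α (a m)}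

section RangeMax

variable {ι α β : Type*}

theorem Set.range_max_subset_union [LinearOrder β] (f g : ι → β) :
    Set.range (fun x => max (f x) (g x)) ⊆ Set.range f ∪ Set.range g := by
  rintro _ ⟨x, rfl⟩
  rcases le_total (f x) (g x) with h | h
  · exact Or.inr ⟨x, (max_eq_right h).symm⟩
  · exact Or.inl ⟨x, (max_eq_left h).symm⟩

/-- If `f x = g y = v`, then whichever of `x`, `y` is smaller is a point where `max f g`
takes the value `v`: at that point the other map is at most `v` by monotonicity. -/
theorem Monotone.range_subset_range_max [LinearOrder α] [LinearOrder β] {f g : α → β}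
    (hf : Monotone f) (hg : Monotone g) (hfg : Set.range f ⊆ Set.range g) :
    Set.range f ⊆ Set.range (fun x => max (f x) (g x)) := by
  rintro _ ⟨x, rfl⟩
  obtain ⟨y, hy⟩ := hfg ⟨x, rfl⟩
  rcases le_total x y with hxy | hyx
  · exact ⟨x, max_eq_left (hy ▸ hg hxy)⟩
  · exact ⟨y, (max_eq_right (hy ▸ hf hyx)).trans hy⟩

end RangeMax

theorem interior_closed_under_addition_general (n k : ℕ)
    (a : Fin k → Fin n)
    (α β : Fin n → Fin n) (hα : Monotone α) (hβ : Monotone β)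
    (hαA : Set.range α = Set.range a) (hβA : Set.range β = Set.range a) :
    Set.range (fun x => max (α x) (β x)) = Set.range a := by
  apply Set.Subset.antisymm
  · calc Set.range (fun x => max (α x) (β x)) ⊆ Set.range α ∪ Set.range β :=
          Set.range_max_subset_union α β
      _ = Set.range a := by rw [hαA, hβA, Set.union_self]
  · rw [← hαA]
    exact hα.range_subset_range_max hβ (hαA.trans hβA.symm).le

/-- the interior of the simplex (maps with image exactly A)
is closed under addition (pointwise maximum). -/
theorem interior_closed_under_addition (n k : ℕ) (hn : 1 ≤ n) (hk : 1 ≤ k)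
    (a : Fin k → Fin n) (ha : StrictMono a)
    (α β : Fin n → Fin n) (hα : Monotone α) (hβ : Monotone β)
    (hαA : Set.range α = Set.range a) (hβA : Set.range β = Set.range a) :
    Set.range (fun x => max (α x) (β x)) = Set.range a :=
  interior_closed_under_addition_general n k a α β hα hβ hαA hβA
end

section
/- Let n ≥ 1, let A = {a_0 < … < a_{k−1}} be a nonempty subset of the chain C_n, fix m ∈ {0,…,k−1} and s ∈ {0,…,n}. Then the s-th layer of the simplex σ^(n){a_0,…,a_{k−1}} with respect to the vertex ā_m is closed under addition: if α and β are monotone maps C_n → C_n with image contained in A such that each of α and β takes the value a_m at exactly s elements of C_n, then the pointwise maximum x ↦ max(α(x), β(x)) also takes the value a_m at exactly s elements of C_n. -/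
open Finset

theorem Finset.card_inter_of_isLowerSet {ι : Type*} [LinearOrder ι] [DecidableEq ι]
    {s t : Finset ι} (hs : IsLowerSet (s : Set ι)) (ht : IsLowerSet (t : Set ι)) :
    #(s ∩ t) = min #s #t := by
  rcases hs.total ht with hst | hts
  · rw [inter_eq_left.mpr (coe_subset.mp hst), min_eq_left (card_le_card (coe_subset.mp hst))]
  · rw [inter_eq_right.mpr (coe_subset.mp hts), min_eq_right (card_le_card (coe_subset.mp hts))]

section MonotoneCount

variable {ι α : Type*} [Fintype ι] [LinearOrder ι] [LinearOrder α]

theorem card_filter_le_eq_card_filter_lt_add (f : ι → α) (v : α) :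
    #{i | f i ≤ v} = #{i | f i < v} + #{i | f i = v} := by
  rw [← card_union_of_disjoint (disjoint_filter.mpr fun _ _ h => h.ne), ← filter_or]
  simp_rw [le_iff_lt_or_eq]

theorem Monotone.isLowerSet_filter {f : ι → α} (hf : Monotone f) {S : Set α}
    (hS : IsLowerSet S) [DecidablePred (· ∈ S)] :
    IsLowerSet ((univ.filter fun i => f i ∈ S : Finset ι) : Set ι) := by
  simpa [Set.preimage] using hS.preimage hf

theorem Monotone.card_filter_max_mem {f g : ι → α} (hf : Monotone f) (hg : Monotone g)
    {S : Set α} (hS : IsLowerSet S) [DecidablePred (· ∈ S)] :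
    #{i | max (f i) (g i) ∈ S} = min #{i | f i ∈ S} #{i | g i ∈ S} := by
  have max_mem_iff (x y : α) : max x y ∈ S ↔ x ∈ S ∧ y ∈ S :=
    ⟨fun h => ⟨hS (le_max_left x y) h, hS (le_max_right x y) h⟩,
      fun ⟨hx, hy⟩ => by rcases max_choice x y with e | e <;> rwa [e]⟩
  rw [← card_inter_of_isLowerSet (hf.isLowerSet_filter hS) (hg.isLowerSet_filter hS),
    ← filter_and]
  simp_rw [max_mem_iff]

theorem Monotone.card_filter_max_eq {f g : ι → α} (hf : Monotone f) (hg : Monotone g) (v : α)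
    (hfg : #{i | f i = v} = #{i | g i = v}) :
    #{i | max (f i) (g i) = v} = #{i | f i = v} := by
  have hle := hf.card_filter_max_mem hg (isLowerSet_Iic v)
  have hlt := hf.card_filter_max_mem hg (isLowerSet_Iio v)
  simp only [Set.mem_Iic, Set.mem_Iio] at hle hlt
  have hf_split := card_filter_le_eq_card_filter_lt_add f v
  have hg_split := card_filter_le_eq_card_filter_lt_add g v
  have hmax_split := card_filter_le_eq_card_filter_lt_add (fun i => max (f i) (g i)) v
  omega

end MonotoneCount

theorem max_mem_endoSimplex {n k : ℕ} {a : Fin k → Fin n} {α β : Fin n → Fin n}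
    (hα : α ∈ EndoSimplex n k a) (hβ : β ∈ EndoSimplex n k a) :
    (fun x => max (α x) (β x)) ∈ EndoSimplex n k a :=
  ⟨hα.1.max hβ.1, fun x => show max (α x) (β x) ∈ _ by
    rcases max_choice (α x) (β x) with e | e <;> rw [e]
    exacts [hα.2 x, hβ.2 x]⟩

theorem layer_closed_under_addition_general (n k : ℕ)
    (a : Fin k → Fin n) (m : Fin k) (s : ℕ)
    (α β : Fin n → Fin n)
    (hα : α ∈ EndoSimplex n k a) (hβ : β ∈ EndoSimplex n k a)
    (hαs : FixCount n α (a m) = s) (hβs : FixCount n β (a m) = s) :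
    (fun x => max (α x) (β x)) ∈ EndoSimplex n k a ∧
    FixCount n (fun x => max (α x) (β x)) (a m) = s :=
  ⟨max_mem_endoSimplex hα hβ,
    (hα.1.card_filter_max_eq hβ.1 (a m) (hαs.trans hβs.symm)).trans hαs⟩

/-- each layer of the simplex with respect to a vertex ā_m is
closed under addition: if α and β each take the value a m at exactly s points,
so does their pointwise maximum (which again lies in the simplex). -/
theorem layer_closed_under_addition (n k : ℕ) (hn : 1 ≤ n) (hk : 1 ≤ k)
    (a : Fin k → Fin n) (ha : StrictMono a) (m : Fin k) (s : ℕ) (hs : s ≤ n)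
    (α β : Fin n → Fin n)
    (hα : α ∈ EndoSimplex n k a) (hβ : β ∈ EndoSimplex n k a)
    (hαs : FixCount n α (a m) = s) (hβs : FixCount n β (a m) = s) :
    (fun x => max (α x) (β x)) ∈ EndoSimplex n k a ∧
    FixCount n (fun x => max (α x) (β x)) (a m) = s :=
  layer_closed_under_addition_general n k a m s α β hα hβ hαs hβs
end

section
/- Let n ≥ 2, let A = {a_0 < … < a_{k−1}} be a nonempty subset of the chain C_n and fix m ∈ {0,…,k−1}. Then the discrete 1-neighborhood DN^1_m = {α ∈ σ^(n){a_0,…,a_{k−1}} : α(i) = a_m for at least n−1 elements i of C_n} is a subsemiring of the simplex σ^(n){a_0,…,a_{k−1}}: it is closed under the pointwise maximum (α+β)(x) = max(α(x), β(x)) and under composition (α·β)(x) = β(α(x)). -/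
theorem le_fixCount_sub_one_iff {n : ℕ} {α : Fin n → Fin n} {c : Fin n} :
    n - 1 ≤ FixCount n α c ↔ {i | α i ≠ c}.Subsingleton := by
  have hsplit := Finset.card_filter_add_card_filter_not (s := Finset.univ) (fun i => α i = c)
  rw [Finset.card_univ, Fintype.card_fin] at hsplit
  have hcard :
      {i | α i ≠ c}.Subsingleton ↔ (Finset.univ.filter (fun i => ¬α i = c)).card ≤ 1 := by
    rw [← Set.ncard_le_one_iff_subsingleton, ← Finset.coe_filter_univ, Set.ncard_coe_finset]
  rw [hcard]
  unfold FixCount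
  omega

section LinearOrder

variable {ι κ : Type*} [LinearOrder κ]

theorem Monotone.apply_eq_self_of_forall_ne {f : κ → κ} (hf : Monotone f) {c : κ}
    (h : ∀ i ≠ c, f i = c) : f c = c := by
  by_contra hne
  rcases lt_or_gt_of_ne hne with hlt | hgt
  · have hle := hf hlt.le
    rw [h _ hlt.ne] at hle
    exact hle.not_gt hlt
  · have hle := hf hgt.le
    rw [h _ hgt.ne'] at hle
    exact hle.not_gt hgt

theorem Monotone.apply_eq_self_of_subsingleton {f : κ → κ} (hf : Monotone f) {c : κ}
    (h : {i | f i ≠ c}.Subsingleton) : f c = c := by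
  by_contra hne
  exact hne (hf.apply_eq_self_of_forall_ne fun i hi => not_not.1 fun hfi => hi (h hfi hne))

theorem subsingleton_comp_ne {f : ι → κ} {g : κ → κ} (hg : Monotone g) {c : κ}
    (hf : {i | f i ≠ c}.Subsingleton) (hg' : {x | g x ≠ c}.Subsingleton) :
    {i | g (f i) ≠ c}.Subsingleton :=
  hf.anti fun i hgfi hfi => hgfi (by rw [hfi, hg.apply_eq_self_of_subsingleton hg'])

theorem max_eq_or_max_eq_of_lt [Preorder ι] {f g : ι → κ} (hf : Monotone f) {c : κ}
    (hf' : {i | f i ≠ c}.Subsingleton) (hg' : {i | g i ≠ c}.Subsingleton)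
    {i j : ι} (hij : i < j) (hfi : f i ≠ c) :
    max (f i) (g i) = c ∨ max (f j) (g j) = c := by
  have hfj : f j = c := not_not.1 fun hfj => hij.ne (hf' hfi hfj)
  by_cases hgj : g j = c
  · exact Or.inr (by rw [hfj, hgj, max_self])
  · have hgi : g i = c := not_not.1 fun hgi => hij.ne (hg' hgi hgj)
    exact Or.inl (by rw [hgi, max_eq_right (hfj ▸ hf hij.le)])

theorem subsingleton_max_ne [LinearOrder ι] {f g : ι → κ} (hf : Monotone f) (hg : Monotone g)
    {c : κ} (hf' : {i | f i ≠ c}.Subsingleton) (hg' : {i | g i ≠ c}.Subsingleton) :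
    {i | max (f i) (g i) ≠ c}.Subsingleton := by
  intro i hi j hj
  by_contra hij
  wlog hlt : i < j generalizing i j
  · exact this hj hi (Ne.symm hij) ((not_lt.1 hlt).lt_of_ne' hij)
  by_cases hfi : f i = c
  · have hgi : g i ≠ c := fun hgi => hi (by rw [hfi, hgi, max_self])
    rcases max_eq_or_max_eq_of_lt hg hg' hf' hlt hgi with h | h
    · exact hi (by rwa [max_comm] at h)
    · exact hj (by rwa [max_comm] at h)
  · rcases max_eq_or_max_eq_of_lt hf hf' hg' hlt hfi with h | h
    · exact hi h
    · exact hj h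

end LinearOrder

theorem DN1_is_subsemiring_general (n k : ℕ)
    (a : Fin k → Fin n) (m : Fin k)
    (α β : Fin n → Fin n)
    (hα : α ∈ DN n k a m 1) (hβ : β ∈ DN n k a m 1) :
    (fun x => max (α x) (β x)) ∈ DN n k a m 1 ∧
    (fun x => β (α x)) ∈ DN n k a m 1 := by
  obtain ⟨⟨hαmono, hαrange⟩, hαfix⟩ := hα
  obtain ⟨⟨hβmono, hβrange⟩, hβfix⟩ := hβ
  rw [le_fixCount_sub_one_iff] at hαfix hβfix
  refine ⟨⟨⟨hαmono.max hβmono, fun x => ?_⟩, ?_⟩,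
    ⟨⟨hβmono.comp hαmono, fun x => hβrange (α x)⟩, ?_⟩⟩
  · show max (α x) (β x) ∈ Set.range a
    rcases max_choice (α x) (β x) with h | h <;> rw [h]
    exacts [hαrange x, hβrange x]
  · exact le_fixCount_sub_one_iff.2 (subsingleton_max_ne hαmono hβmono hαfix hβfix)
  · exact le_fixCount_sub_one_iff.2 (subsingleton_comp_ne hβmono hαfix hβfix)

/-- the discrete 1-neighborhood DN^1_m of a vertex is a
subsemiring of the simplex: closed under pointwise maximum and composition. -/
theorem DN1_is_subsemiring (n k : ℕ) (hn : 2 ≤ n) (hk : 1 ≤ k)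
    (a : Fin k → Fin n) (ha : StrictMono a) (m : Fin k)
    (α β : Fin n → Fin n)
    (hα : α ∈ DN n k a m 1) (hβ : β ∈ DN n k a m 1) :
    (fun x => max (α x) (β x)) ∈ DN n k a m 1 ∧
    (fun x => β (α x)) ∈ DN n k a m 1 :=
  DN1_is_subsemiring_general n k a m α β hα hβ
end

section
/- Let n ≥ 2 and let A = {a_0 < … < a_{k−1}} ⊆ C_n with 0 < a_0 and a_{k−1} < n−1 (so that σ^(n){a_0,…,a_{k−1}} is an internal simplex). Then for each m ∈ {0,…,k−1}, the product of any two elements of DN^1_m is the constant endomorphism ā_m: for all α, β ∈ DN^1_m one has α·β = ā_m. In particular multiplication on DN^1_m is commutative and every element α of DN^1_m is a_m-nilpotent, with α·α = ā_m. -/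
/-!
An element of `DN¹_m` is monotone and differs from `a_m` at most at one point, so monotonicity
squeezes it to `a_m` at every point with a neighbour on each side. In an internal simplex every
value `a_i` is such a point, so `β ∘ α` is constantly `a_m`; commutativity and `α · α = ā_m`
follow at once.
-/

lemma apply_eq_of_ne_of_sub_one_le_fixCount {n : ℕ} {α : Fin n → Fin n} {v : Fin n}
    (hα : n - 1 ≤ FixCount n α v) {i j : Fin n} (hj : α j ≠ v) (hij : i ≠ j) : α i = v := by
  have hsub : Finset.univ.filter (fun x => α x = v) ⊆ Finset.univ.erase j := fun x hx => by
    rw [Finset.mem_filter] at hx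
    exact Finset.mem_erase.mpr ⟨fun hxj => hj (hxj ▸ hx.2), Finset.mem_univ x⟩
  have heq : Finset.univ.filter (fun x => α x = v) = Finset.univ.erase j := by
    refine Finset.eq_of_subset_of_card_le hsub ?_
    simpa [FixCount, Finset.card_erase_of_mem] using hα
  have hi : i ∈ Finset.univ.filter (fun x => α x = v) :=
    heq ▸ Finset.mem_erase.mpr ⟨hij, Finset.mem_univ i⟩
  exact (Finset.mem_filter.mp hi).2

lemma Monotone.apply_eq_of_sub_one_le_fixCount {n : ℕ} {α : Fin n → Fin n} (hmono : Monotone α)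
    {v : Fin n} (hα : n - 1 ≤ FixCount n α v) (j : Fin n) (hj0 : 0 < (j : ℕ))
    (hj1 : (j : ℕ) < n - 1) : α j = v := by
  by_contra hne
  let prev : Fin n := ⟨j - 1, by omega⟩
  let next : Fin n := ⟨j + 1, by omega⟩
  have hprev : α prev = v := apply_eq_of_ne_of_sub_one_le_fixCount hα hne
    (Fin.ne_of_val_ne (show (j : ℕ) - 1 ≠ j by omega))
  have hnext : α next = v := apply_eq_of_ne_of_sub_one_le_fixCount hα hne
    (Fin.ne_of_val_ne (show (j : ℕ) + 1 ≠ j by omega))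
  have hle : α prev ≤ α j := hmono (Fin.le_def.mpr (by simp [prev]))
  have hge : α j ≤ α next := hmono (Fin.le_def.mpr (by simp [next]))
  exact hne (le_antisymm (hnext ▸ hge) (hprev ▸ hle))

lemma mem_Icc_of_mem_endoSimplex {n k : ℕ} (hk : 0 < k) {a : Fin k → Fin n} (ha : Monotone a)
    {α : Fin n → Fin n} (hα : α ∈ EndoSimplex n k a) (x : Fin n) :
    α x ∈ Set.Icc (a ⟨0, hk⟩) (a ⟨k - 1, Nat.sub_one_lt_of_lt hk⟩) := by
  obtain ⟨i, hi⟩ := hα.2 x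
  exact hi ▸ ⟨ha (Fin.le_def.mpr (Nat.zero_le _)),
    ha (Fin.le_def.mpr (Nat.le_sub_one_of_lt i.2))⟩

lemma comp_eq_const_of_mem_DN_one {n k : ℕ} (hk : 0 < k) {a : Fin k → Fin n}
    (ha : Monotone a) (h0 : 0 < (a ⟨0, hk⟩ : ℕ))
    (h1 : (a ⟨k - 1, Nat.sub_one_lt_of_lt hk⟩ : ℕ) < n - 1)
    {m : Fin k} {α β : Fin n → Fin n} (hα : α ∈ DN n k a m 1) (hβ : β ∈ DN n k a m 1) :
    (fun x => β (α x)) = fun _ => a m := by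
  funext x
  obtain ⟨hlo, hhi⟩ := mem_Icc_of_mem_endoSimplex hk ha hα.1 x
  exact hβ.1.1.apply_eq_of_sub_one_le_fixCount hβ.2 (α x)
    (lt_of_lt_of_le h0 (Fin.le_def.mp hlo)) (lt_of_le_of_lt (Fin.le_def.mp hhi) h1)

/-- in an internal simplex (0 < a_0 and a_{k−1} < n−1), the
product of any two elements of DN^1_m is the constant ā_m; in particular
multiplication on DN^1_m is commutative and every α ∈ DN^1_m satisfies
α·α = ā_m (so each element is a_m-nilpotent). -/
theorem internal_DN1_product_constant (n k : ℕ) (hk : 0 < k)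
    (a : Fin k → Fin n) (ha : StrictMono a)
    (h0 : 0 < (a ⟨0, hk⟩ : ℕ))
    (h1 : (a ⟨k - 1, by omega⟩ : ℕ) < n - 1)
    (m : Fin k) :
    (∀ α β : Fin n → Fin n, α ∈ DN n k a m 1 → β ∈ DN n k a m 1 →
      (fun x => β (α x)) = fun _ => a m) ∧
    (∀ α β : Fin n → Fin n, α ∈ DN n k a m 1 → β ∈ DN n k a m 1 →
      (fun x => β (α x)) = fun x => α (β x)) ∧
    (∀ α : Fin n → Fin n, α ∈ DN n k a m 1 →
      (fun x => α (α x)) = fun _ => a m) := by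
  have hconst := fun α β (hα : α ∈ DN n k a m 1) (hβ : β ∈ DN n k a m 1) =>
    comp_eq_const_of_mem_DN_one hk ha.monotone h0 h1 hα hβ
  refine ⟨hconst, fun α β hα hβ => ?_, fun α hα => hconst α α hα hα⟩
  rw [hconst α β hα hβ, hconst β α hβ hα]
end

section
/- Let n ≥ 1 and let A = {a_0 < … < a_{k−1}} be a nonempty subset of the chain C_n. Then for any monotone map α : C_n → C_n with image contained in A, the following are equivalent: α(i) = a_0 for at least a_0 + 1 elements i of C_n, and α(a_0) = a_0. Consequently the discrete (n−a_0−1)-neighborhood of the least vertex ā_0 equals σ^(n){a_0,…,a_{k−1}} ∩ E^(a_0)_{C_n}. -/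
/-!
Since `a₀` is the least vertex, every `α` in the simplex lies above `a₀`, so the fibre of `a₀` under a
monotone `α` is an initial segment of `C_n`. If `α a₀ = a₀`, that segment contains `Iic a₀`, which has
`a₀ + 1` points; otherwise `a₀ < α a₀` and the segment lies in `Iio a₀`, which has only `a₀` points.
-/

open Finset

section MonotoneFibre

variable {ι β : Type*} [LinearOrder ι] [Fintype ι] [LocallyFiniteOrderBot ι] [PartialOrder β]
  [DecidableEq β] {f : ι → β} {v : β} {i : ι}

theorem Monotone.Iic_subset_filter_eq (hf : Monotone f) (hv : ∀ x, v ≤ f x) (hi : f i = v) :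
    Iic i ⊆ univ.filter (f · = v) := fun j hj =>
  mem_filter.mpr ⟨mem_univ j, le_antisymm ((hf (mem_Iic.mp hj)).trans hi.le) (hv j)⟩

theorem Monotone.filter_eq_subset_Iio (hf : Monotone f) (hi : v < f i) :
    univ.filter (f · = v) ⊆ Iio i := fun _ hj =>
  mem_Iio.mpr <| lt_of_not_ge fun hij =>
    (hi.trans_le (hf hij)).ne' (mem_filter.mp hj).2

end MonotoneFibre

theorem succ_le_fixCount_iff {n : ℕ} {α : Fin n → Fin n} {v : Fin n} (hα : Monotone α)
    (hv : ∀ x, v ≤ α x) : (v : ℕ) + 1 ≤ FixCount n α v ↔ α v = v := by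
  refine ⟨fun hcard => ?_, fun hfix => ?_⟩
  · by_contra hne
    have hlt : v < α v := (hv v).lt_of_ne' hne
    have hsmall : FixCount n α v ≤ v := by
      simpa only [FixCount, Fin.card_Iio] using card_le_card (hα.filter_eq_subset_Iio hlt)
    omega
  · simpa only [FixCount, Fin.card_Iic] using card_le_card (hα.Iic_subset_filter_eq hv hfix)

theorem EndoSimplex.le_apply {n k : ℕ} (hk : 0 < k) {a : Fin k → Fin n} (ha : Monotone a)
    {α : Fin n → Fin n} (hα : α ∈ EndoSimplex n k a) (x : Fin n) : a ⟨0, hk⟩ ≤ α x := by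
  obtain ⟨j, hj⟩ := hα.2 x
  exact hj ▸ ha (Nat.zero_le j.val)

theorem DN_least_vertex_eq_general (n k : ℕ) (hk : 0 < k)
    (a : Fin k → Fin n) (ha : StrictMono a) :
    (∀ α : Fin n → Fin n, α ∈ EndoSimplex n k a →
      ((a ⟨0, hk⟩ : ℕ) + 1 ≤ FixCount n α (a ⟨0, hk⟩) ↔
        α (a ⟨0, hk⟩) = a ⟨0, hk⟩)) ∧
    DN n k a ⟨0, hk⟩ (n - (a ⟨0, hk⟩ : ℕ) - 1) =
      EndoSimplex n k a ∩ {α | α (a ⟨0, hk⟩) = a ⟨0, hk⟩} := by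
  have hiff : ∀ α ∈ EndoSimplex n k a,
      ((a ⟨0, hk⟩ : ℕ) + 1 ≤ FixCount n α (a ⟨0, hk⟩) ↔ α (a ⟨0, hk⟩) = a ⟨0, hk⟩) :=
    fun α hα => succ_le_fixCount_iff hα.1 (EndoSimplex.le_apply hk ha.monotone hα)
  refine ⟨hiff, Set.ext fun α => ?_⟩
  have hthreshold : n - (n - (a ⟨0, hk⟩ : ℕ) - 1) = a ⟨0, hk⟩ + 1 := by
    have := (a ⟨0, hk⟩).isLt
    omega
  simp only [DN, hthreshold, Set.mem_inter_iff, Set.mem_ofPred_eq]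
  exact and_congr_right (hiff α)

/-- for α in the simplex, α takes the value a_0 at least a_0 + 1
times iff a_0 is a fixed point of α; consequently the discrete
(n − a_0 − 1)-neighborhood of the least vertex ā_0 equals the intersection of
the simplex with E^(a_0), the endomorphisms fixing a_0. -/
theorem DN_least_vertex_eq (n k : ℕ) (hn : 1 ≤ n) (hk : 0 < k)
    (a : Fin k → Fin n) (ha : StrictMono a) :
    (∀ α : Fin n → Fin n, α ∈ EndoSimplex n k a →
      ((a ⟨0, hk⟩ : ℕ) + 1 ≤ FixCount n α (a ⟨0, hk⟩) ↔
        α (a ⟨0, hk⟩) = a ⟨0, hk⟩)) ∧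
    DN n k a ⟨0, hk⟩ (n - (a ⟨0, hk⟩ : ℕ) - 1) =
      EndoSimplex n k a ∩ {α | α (a ⟨0, hk⟩) = a ⟨0, hk⟩} :=
  DN_least_vertex_eq_general n k hk a ha
end

section
/- Let n ≥ 1 and let A = {a_0 < … < a_{k−1}} be a nonempty subset of the chain C_n. Then for any monotone map α : C_n → C_n with image contained in A, the following are equivalent: α(i) = a_{k−1} for at least n − a_{k−1} elements i of C_n, and α(a_{k−1}) = a_{k−1}. Consequently the discrete a_{k−1}-neighborhood of the biggest vertex ā_{k−1} equals σ^(n){a_0,…,a_{k−1}} ∩ E^(a_{k−1})_{C_n}. -/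
/-! Every value of α is at most the top vertex `M = a_{k-1}`, so by monotonicity the fiber
`α⁻¹(M)` is an up-set of the chain `Fin n`, i.e. a final segment. A final segment contains `M`
exactly when it has at least `n - M` elements, the size of `[M, n)`. -/

lemma Fin.mem_iff_sub_le_card_of_isUpperSet {n : ℕ} {s : Finset (Fin n)}
    (hs : IsUpperSet (s : Set (Fin n))) (x : Fin n) : x ∈ s ↔ n - x ≤ s.card := by
  constructor
  · intro hx
    calc n - (x : ℕ) = (Finset.Ici x).card := (Fin.card_Ici x).symm
      _ ≤ s.card := Finset.card_le_card fun i hi => hs (Finset.mem_Ici.1 hi) hx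
  · intro hcard
    by_contra hx
    have hsub : s ⊆ Finset.Ioi x := fun i hi =>
      Finset.mem_Ioi.2 (lt_of_not_ge fun hix => hx (hs hix hi))
    have := (Finset.card_le_card hsub).trans_eq (Fin.card_Ioi x)
    omega

lemma Monotone.isUpperSet_setOf_eq_of_le {α β : Type*} [Preorder α] [PartialOrder β]
    {f : α → β} (hf : Monotone f) {b : β} (hb : ∀ x, f x ≤ b) :
    IsUpperSet {x | f x = b} := fun _ _ hxy hx =>
  le_antisymm (hb _) (hx ▸ hf hxy)

lemma le_of_mem_endoSimplex {n k : ℕ} (hk : 0 < k) {a : Fin k → Fin n} (ha : Monotone a)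
    {α : Fin n → Fin n} (hα : α ∈ EndoSimplex n k a) (x : Fin n) :
    α x ≤ a ⟨k - 1, by omega⟩ := by
  obtain ⟨j, hj⟩ := hα.2 x
  exact hj ▸ ha (Fin.le_def.2 (by simp only; omega))

lemma fixCount_last_iff_of_mem_endoSimplex {n k : ℕ} (hk : 0 < k) {a : Fin k → Fin n}
    (ha : Monotone a) {α : Fin n → Fin n} (hα : α ∈ EndoSimplex n k a) :
    n - (a ⟨k - 1, by omega⟩ : ℕ) ≤ FixCount n α (a ⟨k - 1, by omega⟩) ↔
      α (a ⟨k - 1, by omega⟩) = a ⟨k - 1, by omega⟩ := by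
  have hup := hα.1.isUpperSet_setOf_eq_of_le (le_of_mem_endoSimplex hk ha hα)
  rw [FixCount, ← Fin.mem_iff_sub_le_card_of_isUpperSet (by rwa [Finset.coe_filter_univ])]
  simp

/-- for α in the simplex, α takes the value a_{k−1} at least
n − a_{k−1} times iff a_{k−1} is a fixed point of α; consequently the discrete
a_{k−1}-neighborhood of the biggest vertex ā_{k−1} equals the intersection of
the simplex with E^(a_{k−1}), the endomorphisms fixing a_{k−1}. -/
theorem DN_biggest_vertex_eq (n k : ℕ) (hn : 1 ≤ n) (hk : 0 < k)
    (a : Fin k → Fin n) (ha : StrictMono a) :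
    (∀ α : Fin n → Fin n, α ∈ EndoSimplex n k a →
      (n - (a ⟨k - 1, by omega⟩ : ℕ) ≤ FixCount n α (a ⟨k - 1, by omega⟩) ↔
        α (a ⟨k - 1, by omega⟩) = a ⟨k - 1, by omega⟩)) ∧
    DN n k a ⟨k - 1, by omega⟩ ((a ⟨k - 1, by omega⟩ : ℕ)) =
      EndoSimplex n k a ∩ {α | α (a ⟨k - 1, by omega⟩) = a ⟨k - 1, by omega⟩} := by
  have key := fun α (hα : α ∈ EndoSimplex n k a) =>
    fixCount_last_iff_of_mem_endoSimplex hk ha.monotone hα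
  refine ⟨key, Set.ext fun α => ?_⟩
  exact and_congr_right (key α)
end

section
/- Let n ≥ 1 and let A = {a_0 < … < a_{k−1}} be a nonempty subset of the chain C_n. The type map T from the simplex σ^(n){a_0,…,a_{k−1}} to the endomorphism semiring Ê_{C_k} of the coordinate simplex is well defined (for each α in the simplex there is a unique monotone map T(α) : C_k → C_k with α(a_i) = a_{T(α)(i)} for all i) and is a homomorphism for both operations: T(α + β) = T(α) + T(β) and T(α·β) = T(α)·T(β) for all α, β in the simplex, where addition is pointwise maximum and multiplication is (α·β)(x) = β(α(x)). -/
def IsType {ι X : Type*} (a : ι → X) (α : X → X) (τ : ι → ι) : Prop :=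
  ∀ i, α (a i) = a (τ i)

namespace IsType

variable {ι X : Type*} {a : ι → X} {α β : X → X} {τ τα τβ : ι → ι}

theorem exists_of_forall_mem_range (hrange : ∀ i, α (a i) ∈ Set.range a) :
    ∃ τ, IsType a α τ := by
  choose τ hτ using hrange
  exact ⟨τ, fun i => (hτ i).symm⟩

theorem unique (ha : Function.Injective a) (hτ : IsType a α τ) (hτ' : IsType a α τ') :
    τ = τ' :=
  funext fun i => ha <| (hτ i).symm.trans (hτ' i)

theorem monotone [LinearOrder ι] [Preorder X] (ha : StrictMono a) (hα : Monotone α)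
    (hτ : IsType a α τ) : Monotone τ := fun i j hij => by
  rw [← ha.le_iff_le, ← hτ i, ← hτ j]
  exact hα (ha.monotone hij)

theorem sup [LinearOrder ι] [SemilatticeSup X] (ha : Monotone a) (hα : IsType a α τα)
    (hβ : IsType a β τβ) : IsType a (α ⊔ β) (τα ⊔ τβ) := fun i => by
  simp only [Pi.sup_apply, hα i, hβ i, ha.map_sup]

theorem comp (hα : IsType a α τα) (hβ : IsType a β τβ) : IsType a (β ∘ α) (τβ ∘ τα) :=
  fun i => (congrArg β (hα i)).trans (hβ (τα i))

end IsType

theorem type_map_is_homomorphism_general (n k : ℕ)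
    (a : Fin k → Fin n) (ha : StrictMono a) :
    (∀ α ∈ EndoSimplex n k a,
      ∃! τ : Fin k → Fin k, Monotone τ ∧ ∀ i, α (a i) = a (τ i)) ∧
    (∀ α β : Fin n → Fin n, α ∈ EndoSimplex n k a → β ∈ EndoSimplex n k a →
      ∀ τα τβ : Fin k → Fin k,
        (∀ i, α (a i) = a (τα i)) → (∀ i, β (a i) = a (τβ i)) →
        (∀ i, max (α (a i)) (β (a i)) = a (max (τα i) (τβ i))) ∧
        (∀ i, β (α (a i)) = a (τβ (τα i)))) := by
  refine ⟨fun α ⟨hα, hrange⟩ => ?_, fun α β _ _ τα τβ hτα hτβ => ?_⟩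
  · obtain ⟨τ, hτ⟩ := IsType.exists_of_forall_mem_range fun i => hrange (a i)
    exact ⟨τ, ⟨hτ.monotone ha hα, hτ⟩, fun _ hτ' => IsType.unique ha.injective hτ'.2 hτ⟩
  · exact ⟨IsType.sup ha.monotone hτα hτβ, IsType.comp hτα hτβ⟩

/-- the type map T is well defined (every α in the simplex has a
unique monotone type τ : Fin k → Fin k with α(a_i) = a(τ i)) and is a
homomorphism for both the pointwise maximum and composition. -/
theorem type_map_is_homomorphism (n k : ℕ) (hn : 1 ≤ n) (hk : 1 ≤ k)
    (a : Fin k → Fin n) (ha : StrictMono a) :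
    (∀ α ∈ EndoSimplex n k a,
      ∃! τ : Fin k → Fin k, Monotone τ ∧ ∀ i, α (a i) = a (τ i)) ∧
    (∀ α β : Fin n → Fin n, α ∈ EndoSimplex n k a → β ∈ EndoSimplex n k a →
      ∀ τα τβ : Fin k → Fin k,
        (∀ i, α (a i) = a (τα i)) → (∀ i, β (a i) = a (τβ i)) →
        (∀ i, max (α (a i)) (β (a i)) = a (max (τα i) (τβ i))) ∧
        (∀ i, β (α (a i)) = a (τβ (τα i)))) :=
  type_map_is_homomorphism_general n k a ha
end

section
/- Let n ≥ 1 and let A = {a_0 < … < a_{k−1}} be a nonempty subset of the chain C_n. Then the set of right identities of the simplex σ^(n){a_0,…,a_{k−1}} is nonempty, is closed under pointwise maximum and composition (so it is a subsemiring), and has cardinality equal to the product ∏_{i=0}^{k−2} (a_{i+1} − a_i) of the gaps between consecutive elements of A (with the empty product equal to 1 when k = 1). -/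
/-!
A right identity of the simplex is exactly a monotone retraction of `Fin n` onto `A = range a`:
testing against the constant maps forces it to fix `A`, and a map fixing `A` is a right identity
of every map with values in `A`. Closure under `max` and composition is then immediate.
On each gap `(a_i, a_{i+1})` such a retraction takes the value `a_i` and then `a_{i+1}`, so it is
determined by the cut points `c_i = #{x | α x ≤ a_i}`, via `α x = a_{#{i | c_i ≤ x}}`; the cuts range
independently over `(a_i, a_{i+1}]`, whence `∏ (a_{i+1} - a_i)` right identities.
-/

open Finset

namespace Fin

theorem val_lt_card_filter_iff {N : ℕ} {P : Fin N → Prop} [DecidablePred P] (hP : Antitone P)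
    (x : Fin N) : (x : ℕ) < #(univ.filter P) ↔ P x := by
  constructor
  · intro hx
    by_contra hPx
    have hsub : univ.filter P ⊆ Iio x := fun y hy => by
      simp only [mem_filter, mem_univ, true_and] at hy
      exact mem_Iio.2 (lt_of_not_ge fun hxy => hPx (hP hxy hy))
    have := card_le_card hsub
    rw [card_Iio] at this
    omega
  · intro hPx
    have hsub : Iic x ⊆ univ.filter P := fun y hy => by
      simpa using hP (mem_Iic.1 hy) hPx
    have := card_le_card hsub
    rw [card_Iic] at this
    omega

end Fin

variable {n k m : ℕ}

def monotoneRetractions (a : Fin k → Fin n) : Set (Fin n → Fin n) :=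
  {α | Monotone α ∧ (∀ x, α x ∈ Set.range a) ∧ ∀ j, α (a j) = a j}

theorem rightIdentities_eq_monotoneRetractions (a : Fin k → Fin n) :
    {α | α ∈ EndoSimplex n k a ∧ ∀ β ∈ EndoSimplex n k a, ∀ x, α (β x) = β x} =
      monotoneRetractions a := by
  ext α
  constructor
  · rintro ⟨⟨hmono, hrange⟩, hright⟩
    exact ⟨hmono, hrange, fun j =>
      hright (fun _ => a j) ⟨monotone_const, fun _ => ⟨j, rfl⟩⟩ (a j)⟩
  · rintro ⟨hmono, hrange, hfix⟩
    refine ⟨⟨hmono, hrange⟩, fun β hβ x => ?_⟩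
    obtain ⟨j, hj⟩ := hβ.2 x
    rw [← hj, hfix]

section Closure

variable {a : Fin k → Fin n} {α β : Fin n → Fin n}

theorem max_mem_monotoneRetractions (hα : α ∈ monotoneRetractions a)
    (hβ : β ∈ monotoneRetractions a) :
    (fun x => max (α x) (β x)) ∈ monotoneRetractions a :=
  ⟨hα.1.max hβ.1,
    fun x => show max (α x) (β x) ∈ _ from
      (max_choice (α x) (β x)).elim (fun h => by rw [h]; exact hα.2.1 x)
        (fun h => by rw [h]; exact hβ.2.1 x),
    fun j => by simp only [hα.2.2 j, hβ.2.2 j, max_self]⟩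

theorem comp_mem_monotoneRetractions (hα : α ∈ monotoneRetractions a)
    (hβ : β ∈ monotoneRetractions a) :
    (fun x => β (α x)) ∈ monotoneRetractions a :=
  ⟨hβ.1.comp hα.1, fun x => hβ.2.1 (α x), fun j => by simp only [hα.2.2 j, hβ.2.2 j]⟩

end Closure

section Cuts

variable {a : Fin (m + 1) → Fin n} {α : Fin n → Fin n} {c : Fin m → ℕ}

variable (a) in
def retractionCut (α : Fin n → Fin n) (i : Fin m) : ℕ :=
  #(univ.filter fun x => α x ≤ a i.castSucc)

variable (a) in
def retractionOfCuts (c : Fin m → ℕ) (x : Fin n) : Fin n :=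
  a ⟨#(univ.filter fun i => c i ≤ x),
    Nat.lt_succ_of_le ((card_filter_le _ _).trans_eq (card_fin m))⟩

theorem val_lt_retractionCut_iff (hα : Monotone α) (i : Fin m) (x : Fin n) :
    (x : ℕ) < retractionCut a α i ↔ α x ≤ a i.castSucc :=
  Fin.val_lt_card_filter_iff (fun _ _ hxy hy => (hα hxy).trans hy) x

theorem retractionCut_mem_Ioc (ha : StrictMono a) (hα : α ∈ monotoneRetractions a)
    (i : Fin m) : retractionCut a α i ∈ Ioc (a i.castSucc : ℕ) (a i.succ) := by
  rw [mem_Ioc]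
  constructor
  · exact (val_lt_retractionCut_iff hα.1 i _).2 (hα.2.2 _).le
  · by_contra! h
    have := (val_lt_retractionCut_iff hα.1 i _).1 h
    rw [hα.2.2] at this
    exact this.not_gt (ha i.castSucc_lt_succ)

theorem retractionOfCuts_retractionCut (ha : StrictMono a) (hα : α ∈ monotoneRetractions a) :
    retractionOfCuts a (retractionCut a α) = α := by
  funext x
  obtain ⟨j, hj⟩ := hα.2.1 x
  rw [retractionOfCuts, ← hj]
  congr
  have hfilter : (univ.filter fun i => retractionCut a α i ≤ x) =
      univ.filter fun i : Fin m => (i : ℕ) < j := by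
    refine filter_congr fun i _ => ?_
    rw [← not_lt, val_lt_retractionCut_iff hα.1, ← hj, ha.le_iff_le, not_le, Fin.lt_def,
      Fin.val_castSucc]
  rw [hfilter, Fin.card_filter_val_lt, min_eq_right (Nat.le_of_lt_succ j.isLt)]

theorem le_apply_iff_lt_of_forall_mem_Ioc (ha : StrictMono a)
    (hc : ∀ i, c i ∈ Ioc (a i.castSucc : ℕ) (a i.succ)) (i : Fin m) (j : Fin (m + 1)) :
    c i ≤ a j ↔ (i : ℕ) < j := by
  constructor
  · intro h
    by_contra! hji
    have : a j ≤ a i.castSucc := ha.monotone (Fin.le_def.2 hji)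
    have := (mem_Ioc.1 (hc i)).1
    omega
  · intro hij
    have : a i.succ ≤ a j := ha.monotone (Fin.le_def.2 hij)
    have := (mem_Ioc.1 (hc i)).2
    omega

theorem monotone_of_forall_mem_Ioc (ha : StrictMono a)
    (hc : ∀ i, c i ∈ Ioc (a i.castSucc : ℕ) (a i.succ)) : Monotone c := by
  intro i i' hii'
  rcases hii'.lt_or_eq with hlt | rfl
  · have := (le_apply_iff_lt_of_forall_mem_Ioc ha hc i i'.castSucc).2 hlt
    have := (mem_Ioc.1 (hc i')).1
    omega
  · exact le_rfl

theorem retractionOfCuts_mem (ha : StrictMono a)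
    (hc : ∀ i, c i ∈ Ioc (a i.castSucc : ℕ) (a i.succ)) :
    retractionOfCuts a c ∈ monotoneRetractions a := by
  refine ⟨fun x y hxy => ha.monotone ?_, fun x => ⟨_, rfl⟩, fun j => congrArg a (Fin.ext ?_)⟩
  · refine Fin.mk_le_mk.2 (card_le_card fun i => ?_)
    simp only [mem_filter, mem_univ, true_and]
    exact fun h => h.trans (Fin.le_def.1 hxy)
  · show #(univ.filter fun i => c i ≤ (a j : ℕ)) = j
    rw [filter_congr fun i _ => le_apply_iff_lt_of_forall_mem_Ioc ha hc i j,
      Fin.card_filter_val_lt, min_eq_right (Nat.le_of_lt_succ j.isLt)]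

theorem retractionCut_retractionOfCuts (ha : StrictMono a)
    (hc : ∀ i, c i ∈ Ioc (a i.castSucc : ℕ) (a i.succ)) :
    retractionCut a (retractionOfCuts a c) = c := by
  funext i
  have hfilter : (univ.filter fun x => retractionOfCuts a c x ≤ a i.castSucc) =
      univ.filter fun x : Fin n => (x : ℕ) < c i := by
    refine filter_congr fun x _ => ?_
    rw [retractionOfCuts, ha.le_iff_le, Fin.le_def, Fin.val_castSucc, ← not_lt,
      Fin.val_lt_card_filter_iff fun _ _ h hx => (monotone_of_forall_mem_Ioc ha hc h).trans hx,
      not_le]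
  have hcn : c i ≤ n := (mem_Ioc.1 (hc i)).2.trans (a i.succ).isLt.le
  rw [retractionCut, hfilter, Fin.card_filter_val_lt, min_eq_right hcn]

end Cuts

section Count

variable {a : Fin (m + 1) → Fin n}

def monotoneRetractionsEquivCuts (ha : StrictMono a) :
    monotoneRetractions a ≃ ∀ i : Fin m, Ioc (a i.castSucc : ℕ) (a i.succ) where
  toFun α i := ⟨retractionCut a α i, retractionCut_mem_Ioc ha α.2 i⟩
  invFun c := ⟨retractionOfCuts a fun i => c i, retractionOfCuts_mem ha fun i => (c i).2⟩
  left_inv α := Subtype.ext (retractionOfCuts_retractionCut ha α.2)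
  right_inv c := funext fun i =>
    Subtype.ext (congrFun (retractionCut_retractionOfCuts ha fun i => (c i).2) i)

theorem ncard_monotoneRetractions (ha : StrictMono a) :
    (monotoneRetractions a).ncard = ∏ i : Fin m, ((a i.succ : ℕ) - a i.castSucc) := by
  rw [← Nat.card_coe_set_eq, Nat.card_congr (monotoneRetractionsEquivCuts ha), Nat.card_pi]
  simp only [Nat.card_eq_fintype_card, Fintype.card_coe, Nat.card_Ioc]

end Count

/-- the set of right identities of the simplex is nonempty, is a
subsemiring (closed under pointwise maximum and composition), and has exactly
∏_{i=0}^{k−2} (a_{i+1} − a_i) elements. -/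
theorem right_identities_semiring_card (n k : ℕ) (hk : 0 < k)
    (a : Fin k → Fin n) (ha : StrictMono a) :
    let RI : Set (Fin n → Fin n) :=
      {α | α ∈ EndoSimplex n k a ∧ ∀ β ∈ EndoSimplex n k a, ∀ x, α (β x) = β x}
    RI.Nonempty ∧
    (∀ α ∈ RI, ∀ β ∈ RI,
      (fun x => max (α x) (β x)) ∈ RI ∧ (fun x => β (α x)) ∈ RI) ∧
    RI.ncard = ∏ i : Fin (k - 1),
      ((a ⟨i.1 + 1, by have := i.isLt; omega⟩ : ℕ) -
        (a ⟨i.1, by have := i.isLt; omega⟩ : ℕ)) := by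
  obtain ⟨m, rfl⟩ := Nat.exists_eq_add_one_of_ne_zero hk.ne'
  intro RI
  have hRI : RI = monotoneRetractions a := rightIdentities_eq_monotoneRetractions a
  have hcard : RI.ncard = ∏ i : Fin m, ((a i.succ : ℕ) - a i.castSucc) :=
    hRI ▸ ncard_monotoneRetractions ha
  refine ⟨Set.nonempty_of_ncard_ne_zero ?_, fun α hα β hβ => ?_, hcard⟩
  · rw [hcard]
    exact (Finset.prod_pos fun i _ => Nat.sub_pos_of_lt (ha i.castSucc_lt_succ)).ne'
  · rw [hRI] at hα hβ ⊢
    exact ⟨max_mem_monotoneRetractions hα hβ, comp_mem_monotoneRetractions hα hβ⟩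
end

section
/- Let n ≥ 2 and let A = {a_0 < … < a_{k−1}} be a subset of the chain C_n with k ≥ 2 and k < n (so A is a proper subset of C_n with at least two elements). Then the simplex σ^(n){a_0,…,a_{k−1}} has no left identity: there is no ω ∈ σ^(n){a_0,…,a_{k−1}} such that ω·β = β (that is, β(ω(x)) = β(x) for all x) for every β ∈ σ^(n){a_0,…,a_{k−1}}. -/
/-
If `ω` is a left identity of the simplex then `β (ω x) = β x` for every `β` in it, in particular for
the two-valued threshold maps `y ↦ if y ≤ t then a₀ else a₁`. These separate the points of the chain,
so `ω` is the identity; but `ω` takes its values in `A`, which misses some point since `k < n`.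
-/

section TwoValued

variable {α β : Type*} [LinearOrder α] [Preorder β]

lemma monotone_ite_le {b₀ b₁ : β} (h : b₀ ≤ b₁) (t : α) :
    Monotone fun y => if y ≤ t then b₀ else b₁ := by
  intro y z hyz
  dsimp only
  split_ifs with hy hz hz
  exacts [le_rfl, h, absurd (hyz.trans hz) hy, le_rfl]

lemma eq_of_forall_monotone_two_valued {b₀ b₁ : β} (h : b₀ < b₁) {u v : α}
    (huv : ∀ f : α → β, Monotone f → (∀ y, f y = b₀ ∨ f y = b₁) → f u = f v) : u = v := by
  by_contra hne
  wlog hlt : u < v generalizing u v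
  · exact this (fun f hf hf₂ => (huv f hf hf₂).symm) (Ne.symm hne)
      (lt_of_le_of_ne (not_lt.1 hlt) (Ne.symm hne))
  have hb := huv _ (monotone_ite_le h.le u) (fun y => by split_ifs <;> simp)
  simp only [le_refl, if_true, hlt.not_ge, if_false] at hb
  exact h.ne hb

end TwoValued

lemma EndoSimplex.apply_eq_self_of_left_identity {n k : ℕ} {a : Fin k → Fin n} {i j : Fin k}
    (hij : a i < a j) {ω : Fin n → Fin n} (hω : ∀ β ∈ EndoSimplex n k a, ∀ x, β (ω x) = β x)
    (x : Fin n) : ω x = x :=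
  eq_of_forall_monotone_two_valued hij fun f hf hf₂ =>
    hω f ⟨hf, fun y => (hf₂ y).elim (fun e => ⟨i, e.symm⟩) (fun e => ⟨j, e.symm⟩)⟩ x

theorem no_left_identity_general (n k : ℕ) (hk : 2 ≤ k) (hkn : k < n)
    (a : Fin k → Fin n) (ha : StrictMono a) :
    ¬ ∃ ω ∈ EndoSimplex n k a, ∀ β ∈ EndoSimplex n k a, ∀ x, β (ω x) = β x := by
  rintro ⟨ω, ⟨-, hω_range⟩, hω⟩
  obtain ⟨x, hx⟩ : ∃ x, x ∉ Set.range a := by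
    by_contra! hsurj
    have := Fintype.card_le_of_surjective a hsurj
    simp only [Fintype.card_fin] at this
    omega
  have h₀₁ : a ⟨0, by omega⟩ < a ⟨1, by omega⟩ := ha (by simp [Fin.lt_def])
  exact hx (EndoSimplex.apply_eq_self_of_left_identity h₀₁ hω x ▸ hω_range x)

/-- a simplex on a proper subset A of C_n with at least two
elements has no left identity. -/
theorem no_left_identity (n k : ℕ) (hn : 2 ≤ n) (hk : 2 ≤ k) (hkn : k < n)
    (a : Fin k → Fin n) (ha : StrictMono a) :
    ¬ ∃ ω ∈ EndoSimplex n k a, ∀ β ∈ EndoSimplex n k a, ∀ x, β (ω x) = β x :=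
  no_left_identity_general n k hk hkn a ha
end
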